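/- arXiv:1503.08413 — 3 statements merged into one kernel-verified Lean document; each statement's English description precedes it below -/
import Mathlib

section
/- Under the hypotheses of the auxiliary lemma (P_θ and Q_θ share the marginal P(X,Y) and the conditional law of the middle block Z_{D1+1}^{n−D2} given (X,Y), with conditional independence of the three blocks of Z given (X,Y)), the following mutual information bounds hold for every θ: I_{P_θ}(X, Y; Z) ≤ I_{Q_θ}(X, Y; Z) + (D1 + D2) log|Z_alphabet|, I_{P_θ}(Y; Z | X) ≤ I_{Q_θ}(Y; Z | X) + (D1 + D2) log|Z_alphabet|, and the same bounds with P_θ and Q_θ interchanged; consequently R_{P,n} ⊆ R_{Q,n} + (1/n)(D1 + D2) log|Z_alphabet| · U and R_{Q,n} ⊆ R_{P,n} + (1/n)(D1 + D2) log|Z_alphabet| · U, where U = [0,1]² and + denotes Minkowski sum. -/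
/-!
Split `Z` into its two outer blocks `U = (Z_1^{D1}, Z_{n-D2+1}^n)`, which take at most
`|C| ^ (D1 + D2)` values, and its middle block `V`. Under `P_θ` and `Q_θ` the triple `(X, Y, V)` has
the same law. By the chain rule `I(Y; U V | X) = I(Y; V | X) + I(Y; U | V, X)` with
`0 ≤ I(Y; U | V, X) ≤ H(U | V, X) ≤ log |U|`, so both conditional informations lie in the interval
`[I(Y; V | X), I(Y; V | X) + log |U|]` fixed by the common law of `(X, Y, V)`; `I(X, Y; Z)` is the
case of a trivial conditioning variable. The region inclusions follow by lowering `R1 + R2` and `R2`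
by `(1/n)(D1 + D2) log |C|`.
-/

open scoped BigOperators
open Real

noncomputable section

namespace ACMACPaper

/-- A probability mass function on a finite type. -/
def IsPMF {α : Type*} [Fintype α] (p : α → ℝ) : Prop :=
  (∀ a, 0 ≤ p a) ∧ ∑ a, p a = 1

/-- Shannon entropy in bits of a pmf on a finite type. -/
def ent {α : Type*} [Fintype α] (p : α → ℝ) : ℝ :=
  -∑ a, p a * Real.logb 2 (p a)

/-- Mutual information `I(A;B)` of a joint pmf on `α × β` (bits). -/
def mutInfo {α β : Type*} [Fintype α] [Fintype β] (p : α × β → ℝ) : ℝ :=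
  ent (fun a => ∑ b, p (a, b)) + ent (fun b => ∑ a, p (a, b)) - ent p

/-- Conditional mutual information `I(A;B|C)` of a joint pmf on `α × β × γ` (bits),
`I(A;B|C) = H(A,C) + H(B,C) - H(A,B,C) - H(C)`. -/
def condMutInfo {α β γ : Type*} [Fintype α] [Fintype β] [Fintype γ]
    (p : α × β × γ → ℝ) : ℝ :=
  ent (fun ac : α × γ => ∑ b, p (ac.1, b, ac.2))
    + ent (fun bc : β × γ => ∑ a, p (a, bc.1, bc.2))
    - ent p - ent (fun c : γ => ∑ a, ∑ b, p (a, b, c))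

/-- Conditional entropy `H(A|B)` of a joint pmf on `α × β` (bits). -/
def condEnt {α β : Type*} [Fintype α] [Fintype β] (p : α × β → ℝ) : ℝ :=
  ent p - ent (fun b : β => ∑ a, p (a, b))

/-- Extension of a finite vector to integer indices; out-of-range symbols get a
fixed (arbitrary) default value. -/
def extVec {n : ℕ} {A : Type*} [Inhabited A] (x : Fin n → A) (j : ℤ) : A :=
  if h : 0 ≤ j ∧ j < (n : ℤ) then x ⟨j.toNat, by omega⟩ else default

/-- The finite set of possible delays `D = {-d_min, …, d_max}`. -/
def delaySet (dmin dmax : ℕ) : Finset ℤ := Finset.Icc (-(dmin : ℤ)) (dmax : ℤ)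

lemma delaySet_nonempty (dmin dmax : ℕ) : (delaySet dmin dmax).Nonempty :=
  ⟨0, by unfold delaySet; rw [Finset.mem_Icc]; omega⟩

variable {X1 X2 Y : Type*} [Fintype X1] [Fintype X2] [Fintype Y]
  [Inhabited X1] [Inhabited X2]

/-- The `n`-letter law of the asynchronous channel with delay `d`:
`P_d(y^n | x1^n, x2^n) = ∏ i, P(y_i | x_{1,i-d}, x_{2,i})`. -/
def blockLaw (W : X1 → X2 → Y → ℝ) (d : ℤ) {n : ℕ}
    (x1 : Fin n → X1) (x2 : Fin n → X2) (y : Fin n → Y) : ℝ :=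
  ∏ i : Fin n, W (extVec x1 (((i : ℕ) : ℤ) - d)) (x2 i) (y i)

/-- Average probability of error of a code, for delay `d`. -/
def avgErr (W : X1 → X2 → Y → ℝ) (d : ℤ) {n K1 K2 : ℕ}
    (f1 : Fin K1 → Fin n → X1) (f2 : Fin K1 → Fin K2 → Fin n → X2)
    (g : (Fin n → Y) → Fin K1 × Fin K2) : ℝ :=
  (1 / ((K1 : ℝ) * (K2 : ℝ))) * ∑ m1 : Fin K1, ∑ m2 : Fin K2, ∑ y : Fin n → Y,
    (if g y ≠ (m1, m2) then blockLaw W d (f1 m1) (f2 m1 m2) y else 0)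

/-- Achievability for the ACMAC (informed encoder knows the message of the
uninformed one): for every `ε > 0` there is a code whose average error
probability is at most `ε` simultaneously for every delay `d ∈ D`. -/
def ACMACAchievable (W : X1 → X2 → Y → ℝ) (dmin dmax : ℕ) (R : ℝ × ℝ) : Prop :=
  0 ≤ R.1 ∧ 0 ≤ R.2 ∧
  ∀ ε : ℝ, 0 < ε → ∃ (n K1 K2 : ℕ) (f1 : Fin K1 → Fin n → X1)
    (f2 : Fin K1 → Fin K2 → Fin n → X2) (g : (Fin n → Y) → Fin K1 × Fin K2),
      0 < n ∧ (2 : ℝ) ^ ((n : ℝ) * R.1) ≤ (K1 : ℝ) ∧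
      (2 : ℝ) ^ ((n : ℝ) * R.2) ≤ (K2 : ℝ) ∧
      ∀ d ∈ delaySet dmin dmax, avgErr W d f1 f2 g ≤ ε

/-- The capacity region of the ACMAC: the closure of the set of achievable
rate pairs. -/
def ACMACCapacity (W : X1 → X2 → Y → ℝ) (dmin dmax : ℕ) : Set (ℝ × ℝ) :=
  closure {R | ACMACAchievable W dmin dmax R}

end ACMACPaper

namespace ACMACPaper

variable {A B C : Type*} [Fintype A] [Fintype B] [Fintype C] [Inhabited C]
  {Θ : Type*} [Fintype Θ]

/-- The first block `Z_1^{D1}` of a vector `z`. -/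
def frontOf {n : ℕ} (D1 : ℕ) (z : Fin n → C) : Fin D1 → C :=
  fun j => extVec z ((j : ℕ) : ℤ)

/-- The last block `Z_{n-D2+1}^{n}` of a vector `z`. -/
def backOf {n : ℕ} (D2 : ℕ) (z : Fin n → C) : Fin D2 → C :=
  fun j => extVec z ((n : ℤ) - (D2 : ℤ) + (j : ℕ))

/-- The middle block `Z_{D1+1}^{n-D2}` of a vector `z`. -/
def midOf {n : ℕ} (D1 D2 : ℕ) (z : Fin n → C) : Fin (n - D1 - D2) → C :=
  fun j => extVec z ((D1 : ℤ) + (j : ℕ))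

/-- The factorization hypothesis of the auxiliary lemma: the two conditional
laws `P(z|x,y)` and `Q(z|x,y)` factor into independent blocks, with a *common*
conditional law `c` of the middle block `Z_{D1+1}^{n-D2}` given `(x,y)`. -/
def FactorPair (D1 D2 : ℕ) {n : ℕ}
    (P Q : ((Fin n → A) × (Fin n → B)) → (Fin n → C) → ℝ) : Prop :=
  ∃ (a a' : ((Fin n → A) × (Fin n → B)) → (Fin D1 → C) → ℝ)
    (b b' : ((Fin n → A) × (Fin n → B)) → (Fin D2 → C) → ℝ)
    (c : ((Fin n → A) × (Fin n → B)) → (Fin (n - D1 - D2) → C) → ℝ),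
    (∀ xy, IsPMF (a xy)) ∧ (∀ xy, IsPMF (a' xy)) ∧ (∀ xy, IsPMF (b xy)) ∧
    (∀ xy, IsPMF (b' xy)) ∧ (∀ xy, IsPMF (c xy)) ∧
    (∀ xy z, P xy z = a xy (frontOf D1 z) * b xy (backOf D2 z) * c xy (midOf D1 D2 z)) ∧
    (∀ xy z, Q xy z = a' xy (frontOf D1 z) * b' xy (backOf D2 z) * c xy (midOf D1 D2 z))

/-- The region `R_{P,n} = ∪_{P(x,y)} ∩_{θ∈Θ}
{(R1,R2) : R1+R2 ≤ (1/n) I_{P_θ}(X,Y;Z), R2 ≤ (1/n) I_{P_θ}(Y;Z|X)}`. -/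
def RegOf (Pk : (n : ℕ) → Θ → ((Fin n → A) × (Fin n → B)) → (Fin n → C) → ℝ)
    (n : ℕ) : Set (ℝ × ℝ) :=
  {R | 0 ≤ R.1 ∧ 0 ≤ R.2 ∧
    ∃ p : ((Fin n → A) × (Fin n → B)) → ℝ, IsPMF p ∧
      ∀ θ : Θ,
        R.1 + R.2 ≤ (1 / (n : ℝ)) *
            mutInfo (fun z : ((Fin n → A) × (Fin n → B)) × (Fin n → C) =>
              p z.1 * Pk n θ z.1 z.2) ∧
        R.2 ≤ (1 / (n : ℝ)) *
            condMutInfo (fun z : (Fin n → B) × (Fin n → C) × (Fin n → A) =>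
              p (z.2.2, z.1) * Pk n θ (z.2.2, z.1) z.2.1)}

/-- Set-theoretic limit inferior of a sequence of sets. -/
def setLiminf (S : ℕ → Set (ℝ × ℝ)) : Set (ℝ × ℝ) :=
  ⋃ N : ℕ, ⋂ n : ℕ, ⋂ (_ : N ≤ n), S n

/-- Set-theoretic limit superior of a sequence of sets. -/
def setLimsup (S : ℕ → Set (ℝ × ℝ)) : Set (ℝ × ℝ) :=
  ⋂ N : ℕ, ⋃ n : ℕ, ⋃ (_ : N ≤ n), S n

end ACMACPaper

namespace ACMACPaper

section Entropy

variable {α β : Type*} [Fintype α] [Fintype β]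

lemma IsPMF.comp_equiv {p : β → ℝ} (hp : IsPMF p) (e : α ≃ β) : IsPMF (p ∘ e) :=
  ⟨fun _ => hp.1 _, by rw [← hp.2]; exact e.sum_comp p⟩

lemma IsPMF.sum_fst {p : α × β → ℝ} (hp : IsPMF p) : IsPMF (fun b => ∑ a, p (a, b)) :=
  ⟨fun _ => Finset.sum_nonneg fun _ _ => hp.1 _, by rw [← hp.2, Fintype.sum_prod_type_right]⟩

lemma mul_logb_sub_mul_logb_le {p q : ℝ} (hp : 0 ≤ p) (hq : 0 ≤ q) (hpq : p ≠ 0 → q ≠ 0) :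
    p * logb 2 q - p * logb 2 p ≤ (q - p) / log 2 := by
  rcases hp.eq_or_lt with rfl | hp
  · simp only [zero_mul, sub_zero]
    positivity
  have hq : 0 < q := hq.lt_of_ne (hpq hp.ne').symm
  have key : p * log (q / p) ≤ q - p := by
    calc p * log (q / p) ≤ p * (q / p - 1) :=
          mul_le_mul_of_nonneg_left (log_le_sub_one_of_pos (by positivity)) hp.le
      _ = q - p := by field_simp
  rw [log_div hq.ne' hp.ne'] at key
  simp only [logb, le_div_iff₀ (log_pos one_lt_two)]
  field_simp
  linarith

/-- Gibbs' inequality. -/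
lemma sum_mul_logb_le_sum_mul_logb {p q : α → ℝ} (hp : ∀ a, 0 ≤ p a) (hq : ∀ a, 0 ≤ q a)
    (hsum : ∑ a, q a ≤ ∑ a, p a) (hpq : ∀ a, p a ≠ 0 → q a ≠ 0) :
    ∑ a, p a * logb 2 (q a) ≤ ∑ a, p a * logb 2 (p a) := by
  have h := Finset.sum_le_sum fun a (_ : a ∈ Finset.univ) =>
    mul_logb_sub_mul_logb_le (hp a) (hq a) (hpq a)
  rw [Finset.sum_sub_distrib, ← Finset.sum_div, Finset.sum_sub_distrib] at h
  have : (∑ a, q a - ∑ a, p a) / log 2 ≤ 0 :=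
    div_nonpos_of_nonpos_of_nonneg (by linarith) (log_nonneg one_le_two)
  linarith

lemma ent_comp_equiv (e : α ≃ β) (p : β → ℝ) : ent (p ∘ e) = ent p := by
  simp only [ent, Function.comp_apply, e.sum_comp (fun b => p b * logb 2 (p b))]

lemma ent_snd_eq (p : α × β → ℝ) :
    ent (fun b => ∑ a, p (a, b)) = -∑ x, p x * logb 2 (∑ a, p (a, x.2)) := by
  simp only [ent, Fintype.sum_prod_type_right, Finset.sum_mul]

omit [Fintype β] in
lemma le_sum_fst (p : α × β → ℝ) (hp : ∀ x, 0 ≤ p x) (x : α × β) : p x ≤ ∑ a, p (a, x.2) :=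
  Finset.single_le_sum (f := fun a => p (a, x.2)) (fun _ _ => hp _) (Finset.mem_univ x.1)

lemma ent_snd_le (p : α × β → ℝ) (hp : ∀ x, 0 ≤ p x) :
    ent (fun b => ∑ a, p (a, b)) ≤ ent p := by
  rw [ent_snd_eq, ent, neg_le_neg_iff]
  refine Finset.sum_le_sum fun x _ => ?_
  rcases (hp x).eq_or_lt with h | h
  · simp [← h]
  · exact mul_le_mul_of_nonneg_left
      (logb_le_logb_of_le one_lt_two h (le_sum_fst p hp x)) h.le

lemma ent_le_logb_card_add_ent_snd (p : α × β → ℝ) (hp : IsPMF p) :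
    ent p ≤ logb 2 (Fintype.card α) + ent (fun b => ∑ a, p (a, b)) := by
  obtain ⟨hp0, hp1⟩ := hp
  set N : ℝ := (Fintype.card α : ℝ)
  have hN : 0 < N := by
    have : Nonempty α := by
      by_contra h
      simp [not_nonempty_iff.mp h] at hp1
    exact Nat.cast_pos.mpr Fintype.card_pos
  set m : β → ℝ := fun b => ∑ a, p (a, b)
  have hm : ∀ x, p x ≠ 0 → m x.2 ≠ 0 := fun x hx =>
    (((hp0 x).lt_of_ne' hx).trans_le (le_sum_fst p hp0 x)).ne'
  have hq_sum : ∑ x : α × β, m x.2 / N = ∑ x, p x := by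
    calc ∑ x : α × β, m x.2 / N = ∑ b, N * (m b / N) := by
          simp [Fintype.sum_prod_type_right, N]
      _ = ∑ x, p x := by
          simp only [mul_div_cancel₀ _ hN.ne', m, Fintype.sum_prod_type_right]
  -- Gibbs against the product of the `β`-marginal with the uniform law on `α`.
  have gibbs := sum_mul_logb_le_sum_mul_logb (q := fun x => m x.2 / N) hp0
    (fun _ => div_nonneg (Finset.sum_nonneg fun _ _ => hp0 _) hN.le) hq_sum.le
    (fun x hx => div_ne_zero (hm x hx) hN.ne')
  have lhs : ∑ x, p x * logb 2 (m x.2 / N) = -ent m - logb 2 N := by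
    have split : ∀ x, p x * logb 2 (m x.2 / N) = p x * logb 2 (m x.2) - p x * logb 2 N := by
      intro x
      rcases eq_or_ne (p x) 0 with h | h
      · simp [h]
      · rw [logb_div (hm x h) hN.ne']
        ring
    rw [ent_snd_eq]
    simp only [split, Finset.sum_sub_distrib, ← Finset.sum_mul, hp1]
    ring
  rw [lhs] at gibbs
  rw [ent]
  linarith

end Entropy

section CondMutInfo

variable {α β γ : Type*} [Fintype α] [Fintype β] [Fintype γ]

lemma condMutInfo_eq_sum (p : α × β × γ → ℝ) :
    condMutInfo p = ∑ x, p x * (logb 2 (p x) - logb 2 (∑ b, p (x.1, b, x.2.2))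
      - logb 2 (∑ a, p (a, x.2.1, x.2.2)) + logb 2 (∑ a, ∑ b, p (a, b, x.2.2))) := by
  have hAC : ∑ ac : α × γ, (∑ b, p (ac.1, b, ac.2)) * logb 2 (∑ b, p (ac.1, b, ac.2))
      = ∑ x, p x * logb 2 (∑ b, p (x.1, b, x.2.2)) := by
    simp only [Fintype.sum_prod_type, Finset.sum_mul]
    exact Finset.sum_congr rfl fun _ _ => Finset.sum_comm
  have hBC : ∑ bc : β × γ, (∑ a, p (a, bc.1, bc.2)) * logb 2 (∑ a, p (a, bc.1, bc.2))
      = ∑ x, p x * logb 2 (∑ a, p (a, x.2.1, x.2.2)) := by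
    simp only [Fintype.sum_prod_type, Finset.sum_mul]
    symm
    rw [Finset.sum_comm]
    exact Finset.sum_congr rfl fun _ _ => Finset.sum_comm
  have hC : ∑ c : γ, (∑ a, ∑ b, p (a, b, c)) * logb 2 (∑ a, ∑ b, p (a, b, c))
      = ∑ x, p x * logb 2 (∑ a, ∑ b, p (a, b, x.2.2)) := by
    simp only [Fintype.sum_prod_type, Finset.sum_mul]
    rw [Finset.sum_comm]
    exact Finset.sum_congr rfl fun _ _ => Finset.sum_comm
  simp only [condMutInfo, ent, hAC, hBC, hC, mul_add, mul_sub, Finset.sum_add_distrib,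
    Finset.sum_sub_distrib]
  ring

lemma condMutInfo_nonneg (p : α × β × γ → ℝ) (hp0 : ∀ x, 0 ≤ p x) : 0 ≤ condMutInfo p := by
  set mAC : α × γ → ℝ := fun ac => ∑ b, p (ac.1, b, ac.2)
  set mBC : β × γ → ℝ := fun bc => ∑ a, p (a, bc.1, bc.2)
  set mC : γ → ℝ := fun c => ∑ a, ∑ b, p (a, b, c)
  have supp (x : α × β × γ) (hx : p x ≠ 0) :
      mAC (x.1, x.2.2) ≠ 0 ∧ mBC (x.2.1, x.2.2) ≠ 0 ∧ mC x.2.2 ≠ 0 := by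
    have hpos := (hp0 x).lt_of_ne' hx
    have hAC : p x ≤ mAC (x.1, x.2.2) :=
      Finset.single_le_sum (f := fun b => p (x.1, b, x.2.2)) (fun _ _ => hp0 _)
        (Finset.mem_univ x.2.1)
    have hBC : p x ≤ mBC (x.2.1, x.2.2) :=
      Finset.single_le_sum (f := fun a => p (a, x.2.1, x.2.2)) (fun _ _ => hp0 _)
        (Finset.mem_univ x.1)
    have hC : mAC (x.1, x.2.2) ≤ mC x.2.2 :=
      Finset.single_le_sum (f := fun a => mAC (a, x.2.2))
        (fun _ _ => Finset.sum_nonneg fun _ _ => hp0 _) (Finset.mem_univ x.1)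
    exact ⟨(hpos.trans_le hAC).ne', (hpos.trans_le hBC).ne', (hpos.trans_le (hAC.trans hC)).ne'⟩
  -- Gibbs against `p(a|c) p(b|c) p(c)`, which has the same total mass as `p`.
  set q : α × β × γ → ℝ := fun x => mAC (x.1, x.2.2) * mBC (x.2.1, x.2.2) / mC x.2.2
  have hq_sum : ∑ x, q x = ∑ x, p x := by
    calc ∑ x, q x = ∑ c, (∑ a, mAC (a, c)) * (∑ b, mBC (b, c)) / mC c := by
          simp only [q, Fintype.sum_prod_type, Finset.sum_mul_sum, Finset.sum_div]
          symm
          rw [Finset.sum_comm]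
          exact Finset.sum_congr rfl fun _ _ => Finset.sum_comm
      _ = ∑ c, mC c * mC c / mC c := by
          simp only [mAC, mBC, mC]
          exact Finset.sum_congr rfl fun _ _ => by rw [Finset.sum_comm (γ := β)]
      _ = ∑ x, p x := by
          simp only [mul_self_div_self, mC, Fintype.sum_prod_type]
          rw [Finset.sum_comm]
          exact Finset.sum_congr rfl fun _ _ => Finset.sum_comm
  have gibbs := sum_mul_logb_le_sum_mul_logb (q := q) hp0
    (fun x => div_nonneg (mul_nonneg (Finset.sum_nonneg fun _ _ => hp0 _)
      (Finset.sum_nonneg fun _ _ => hp0 _)) (Finset.sum_nonneg fun _ _ =>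
        Finset.sum_nonneg fun _ _ => hp0 _)) hq_sum.le
    (fun x hx => by
      obtain ⟨h1, h2, h3⟩ := supp x hx
      exact div_ne_zero (mul_ne_zero h1 h2) h3)
  have split (x : α × β × γ) : p x * logb 2 (q x) = p x * (logb 2 (mAC (x.1, x.2.2))
      + logb 2 (mBC (x.2.1, x.2.2)) - logb 2 (mC x.2.2)) := by
    rcases eq_or_ne (p x) 0 with h | h
    · simp [h]
    · obtain ⟨h1, h2, h3⟩ := supp x h
      rw [logb_div (mul_ne_zero h1 h2) h3, logb_mul h1 h2]
  calc 0 ≤ ∑ x, p x * logb 2 (p x) - ∑ x, p x * logb 2 (q x) := sub_nonneg.mpr gibbs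
    _ = condMutInfo p := by
      rw [condMutInfo_eq_sum, ← Finset.sum_sub_distrib]
      exact Finset.sum_congr rfl fun x _ => by rw [split]; ring

lemma condMutInfo_comp_equiv_mid {δ : Type*} [Fintype δ] (e : δ ≃ β) (p : α × β × γ → ℝ) :
    condMutInfo (fun t : α × δ × γ => p (t.1, e t.2.1, t.2.2)) = condMutInfo p := by
  have hAC (a : α) (c : γ) : ∑ d, p (a, e d, c) = ∑ b, p (a, b, c) :=
    e.sum_comp fun b => p (a, b, c)
  have hBC := ent_comp_equiv (e.prodCongr (Equiv.refl γ)) (fun bc => ∑ a, p (a, bc.1, bc.2))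
  have hABC := ent_comp_equiv ((Equiv.refl α).prodCongr (e.prodCongr (Equiv.refl γ))) p
  simp only [Function.comp_def, Equiv.prodCongr_apply, Equiv.coe_refl, Prod.map, id] at hBC hABC
  simp only [condMutInfo, hAC, hBC, hABC]

end CondMutInfo

section MarginalComparison

variable {Y U V X : Type*} [Fintype Y] [Fintype U] [Fintype V] [Fintype X]

lemma condMutInfo_le_add_logb_card (J J' : Y × (U × V) × X → ℝ) (hJ : IsPMF J)
    (hJ' : IsPMF J') (hm : ∀ y v x, ∑ u, J (y, (u, v), x) = ∑ u, J' (y, (u, v), x)) :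
    condMutInfo J ≤ condMutInfo J' + logb 2 (Fintype.card U) := by
  let e : U × Y × V × X ≃ Y × (U × V) × X :=
    ⟨fun s => (s.2.1, (s.1, s.2.2.1), s.2.2.2), fun t => (t.2.1.1, t.1, t.2.1.2, t.2.2),
      fun _ => rfl, fun _ => rfl⟩
  -- `H(U, V, X) ≤ log |U| + H(V, X)` under `J`
  have hUVX : ent (fun t : U × V × X => ∑ y, J (y, (t.1, t.2.1), t.2.2))
      ≤ logb 2 (Fintype.card U) + ent (fun c : V × X => ∑ u, ∑ y, J (y, (u, c.1), c.2)) :=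
    ent_le_logb_card_add_ent_snd _
      (hJ.comp_equiv ((Equiv.refl Y).prodCongr (Equiv.prodAssoc U V X).symm)).sum_fst
  -- `H(Y, V, X) ≤ H(Y, U, V, X)` under `J`
  have hYVX : ent (fun t : Y × V × X => ∑ u, J (t.1, (u, t.2.1), t.2.2)) ≤ ent J :=
    (ent_snd_le (J ∘ e) fun s => hJ.1 (e s)).trans_eq (ent_comp_equiv e J)
  -- `I(U; Y | V, X) ≥ 0` under `J'`
  have hI : ent (fun c : V × X => ∑ u, ∑ y, J' (y, (u, c.1), c.2))
        - ent (fun t : Y × V × X => ∑ u, J' (t.1, (u, t.2.1), t.2.2))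
      ≤ ent (fun t : U × V × X => ∑ y, J' (y, (t.1, t.2.1), t.2.2)) - ent J' := by
    have h : 0 ≤ ent (fun t : U × V × X => ∑ y, J' (y, (t.1, t.2.1), t.2.2))
        + ent (fun t : Y × V × X => ∑ u, J' (t.1, (u, t.2.1), t.2.2)) - ent (J' ∘ e)
        - ent (fun c : V × X => ∑ u, ∑ y, J' (y, (u, c.1), c.2)) :=
      condMutInfo_nonneg (J' ∘ e) fun s => hJ'.1 (e s)
    rw [ent_comp_equiv] at h
    linarith
  have hVX (c : V × X) : ∑ u, ∑ y, J' (y, (u, c.1), c.2) = ∑ u, ∑ y, J (y, (u, c.1), c.2) := by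
    rw [Finset.sum_comm, Finset.sum_comm (f := fun u y => J (y, (u, c.1), c.2))]
    simp only [hm]
  have hYX (y : Y) (x : X) : ∑ uv, J (y, uv, x) = ∑ uv, J' (y, uv, x) := by
    simp only [Fintype.sum_prod_type_right, hm]
  have assoc (G : Y × (U × V) × X → ℝ) :
      ent (fun bc : (U × V) × X => ∑ y, G (y, bc.1, bc.2))
        = ent (fun t : U × V × X => ∑ y, G (y, (t.1, t.2.1), t.2.2)) :=
    ent_comp_equiv (Equiv.prodAssoc U V X) (fun t => ∑ y, G (y, (t.1, t.2.1), t.2.2))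
  simp only [← hm, hVX] at hI
  simp only [condMutInfo, assoc, hYX]
  linarith

end MarginalComparison

section Channel

variable {X Y Z U V : Type*} [Fintype X] [Fintype Y] [Fintype Z] [Fintype U] [Fintype V]

/-- `I(X, Y; Z)` for the input law `p` of `(X, Y)` and the channel `P(z | x, y)`. -/
def jointInfo (p : X × Y → ℝ) (P : X × Y → Z → ℝ) : ℝ :=
  mutInfo (fun z : (X × Y) × Z => p z.1 * P z.1 z.2)

/-- `I(Y; Z | X)` for the input law `p` of `(X, Y)` and the channel `P(z | x, y)`. -/
def condInfo (p : X × Y → ℝ) (P : X × Y → Z → ℝ) : ℝ :=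
  condMutInfo (fun z : Y × Z × X => p (z.2.2, z.1) * P (z.2.2, z.1) z.2.1)

lemma IsPMF.joint {p : X → ℝ} (hp : IsPMF p) {P : X → Z → ℝ} (hP : ∀ x, IsPMF (P x)) :
    IsPMF (fun t : X × Z => p t.1 * P t.1 t.2) :=
  ⟨fun _ => mul_nonneg (hp.1 _) ((hP _).1 _), by
    simp only [Fintype.sum_prod_type, ← Finset.mul_sum, (hP _).2, mul_one, hp.2]⟩

lemma isPMF_condInfo_law {p : X × Y → ℝ} (hp : IsPMF p) {P : X × Y → Z → ℝ}
    (hP : ∀ w, IsPMF (P w)) :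
    IsPMF (fun z : Y × Z × X => p (z.2.2, z.1) * P (z.2.2, z.1) z.2.1) :=
  (hp.joint hP).comp_equiv
    ⟨fun t : Y × Z × X => ((t.2.2, t.1), t.2.1), fun s => (s.1.2, s.2, s.1.1),
      fun _ => rfl, fun _ => rfl⟩

lemma condInfo_nonneg {p : X × Y → ℝ} (hp : IsPMF p) {P : X × Y → Z → ℝ}
    (hP : ∀ w, IsPMF (P w)) : 0 ≤ condInfo p P :=
  condMutInfo_nonneg _ (isPMF_condInfo_law hp hP).1

lemma mutInfo_eq_condMutInfo_unit {q : X × Y → ℝ} (hq : ∑ w, q w = 1) :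
    mutInfo q = condMutInfo (fun t : X × Y × Unit => q (t.1, t.2.1)) := by
  have hX := ent_comp_equiv (Equiv.prodPUnit X) (fun x => ∑ y, q (x, y))
  have hY := ent_comp_equiv (Equiv.prodPUnit Y) (fun y => ∑ x, q (x, y))
  have hXY := ent_comp_equiv ((Equiv.refl X).prodCongr (Equiv.prodPUnit Y)) q
  have hUnit : ent (fun _ : Unit => ∑ x, ∑ y, q (x, y)) = 0 := by
    simp [ent, ← Fintype.sum_prod_type, hq]
  simp only [Function.comp_def, Equiv.prodPUnit_apply, Equiv.prodCongr_apply, Equiv.coe_refl,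
    Prod.map, id] at hX hY hXY
  simp only [mutInfo, condMutInfo, hUnit, sub_zero]
  rw [hX, hY, hXY]

lemma jointInfo_eq_condInfo {p : X × Y → ℝ} (hp : IsPMF p) {P : X × Y → Z → ℝ}
    (hP : ∀ w, IsPMF (P w)) :
    jointInfo p P = condInfo (fun t : Unit × (X × Y) => p t.2) (fun t => P t.2) :=
  mutInfo_eq_condMutInfo_unit (hp.joint hP).2

lemma jointInfo_nonneg {p : X × Y → ℝ} (hp : IsPMF p) {P : X × Y → Z → ℝ}
    (hP : ∀ w, IsPMF (P w)) : 0 ≤ jointInfo p P := by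
  rw [jointInfo_eq_condInfo hp hP]
  exact condInfo_nonneg (hp.comp_equiv (Equiv.punitProd _)) fun w => hP w.2

lemma condInfo_le_add_logb_card (e : Z ≃ U × V) {p : X × Y → ℝ} (hp : IsPMF p)
    {P Q : X × Y → Z → ℝ} (hP : ∀ w, IsPMF (P w)) (hQ : ∀ w, IsPMF (Q w))
    (hPQ : ∀ w v, ∑ u, P w (e.symm (u, v)) = ∑ u, Q w (e.symm (u, v))) :
    condInfo p P ≤ condInfo p Q + logb 2 (Fintype.card U) := by
  have transport (R : X × Y → Z → ℝ) :
      condInfo p R = condInfo p (fun w uv => R w (e.symm uv)) :=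
    (condMutInfo_comp_equiv_mid e.symm _).symm
  rw [transport P, transport Q]
  refine condMutInfo_le_add_logb_card _ _
    (isPMF_condInfo_law hp fun w => (hP w).comp_equiv e.symm)
    (isPMF_condInfo_law hp fun w => (hQ w).comp_equiv e.symm) fun y v x => ?_
  simp only [← Finset.mul_sum, hPQ]

lemma jointInfo_le_add_logb_card (e : Z ≃ U × V) {p : X × Y → ℝ} (hp : IsPMF p)
    {P Q : X × Y → Z → ℝ} (hP : ∀ w, IsPMF (P w)) (hQ : ∀ w, IsPMF (Q w))
    (hPQ : ∀ w v, ∑ u, P w (e.symm (u, v)) = ∑ u, Q w (e.symm (u, v))) :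
    jointInfo p P ≤ jointInfo p Q + logb 2 (Fintype.card U) := by
  rw [jointInfo_eq_condInfo hp hP, jointInfo_eq_condInfo hp hQ]
  exact condInfo_le_add_logb_card e (hp.comp_equiv (Equiv.punitProd _)) (fun w => hP w.2)
    (fun w => hQ w.2) fun w => hPQ w.2

end Channel

section Blocks

variable {C : Type*} [Inhabited C] {n : ℕ}

lemma extVec_natCast (x : Fin n → C) (j : ℕ) (h : j < n) :
    extVec x (j : ℤ) = x ⟨j, h⟩ := by
  rw [extVec, dif_pos ⟨Int.natCast_nonneg j, by exact_mod_cast h⟩]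
  rfl

def splitEquiv (D1 D2 : ℕ) (hn : D1 + D2 ≤ n) :
    (Fin n → C) ≃ ((Fin D1 → C) × (Fin D2 → C)) × (Fin (n - D1 - D2) → C) where
  toFun z := ((frontOf D1 z, backOf D2 z), midOf D1 D2 z)
  invFun w i :=
    if h1 : (i : ℕ) < D1 then w.1.1 ⟨i, h1⟩
    else if h2 : (i : ℕ) < n - D2 then w.2 ⟨i - D1, by omega⟩
    else w.1.2 ⟨i - (n - D2), by omega⟩
  left_inv z := by
    funext i
    have hi := i.isLt
    dsimp only
    split_ifs with h1 h2
    · exact extVec_natCast z i hi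
    · simp only [midOf]
      rw [show (D1 : ℤ) + ((i - D1 : ℕ) : ℤ) = ((i : ℕ) : ℤ) by omega]
      exact extVec_natCast z i hi
    · simp only [backOf]
      rw [show (n : ℤ) - D2 + ((i - (n - D2) : ℕ) : ℤ) = ((i : ℕ) : ℤ) by omega]
      exact extVec_natCast z i hi
  right_inv := by
    rintro ⟨⟨f, b⟩, m⟩
    refine Prod.ext (Prod.ext ?_ ?_) ?_ <;> funext j <;> have hj := j.isLt
    · simp only [frontOf]
      rw [extVec_natCast _ j (by omega), dif_pos hj]
    · simp only [backOf]
      rw [show (n : ℤ) - D2 + (j : ℕ) = ((n - D2 + j : ℕ) : ℤ) by omega,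
        extVec_natCast _ _ (by omega)]
      dsimp only
      rw [dif_neg (by omega), dif_neg (by omega)]
      congr 1
      ext
      simp only
      omega
    · simp only [midOf]
      rw [show (D1 : ℤ) + (j : ℕ) = ((D1 + j : ℕ) : ℤ) by omega,
        extVec_natCast _ _ (by omega)]
      dsimp only
      rw [dif_neg (by omega), dif_pos (by omega)]
      congr 1
      ext
      simp only
      omega

end Blocks

section Factorization

variable {A B C : Type*} [Fintype C] {D1 D2 n : ℕ}

lemma logb_card_blocks :
    logb 2 (Fintype.card ((Fin D1 → C) × (Fin D2 → C))) = (D1 + D2) * logb 2 (Fintype.card C) := by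
  simp only [Fintype.card_prod, Fintype.card_fun, Fintype.card_fin, ← pow_add, Nat.cast_pow,
    logb_pow, Nat.cast_add]

variable [Inhabited C] {P Q : ((Fin n → A) × (Fin n → B)) → (Fin n → C) → ℝ}

lemma FactorPair.symm (h : FactorPair D1 D2 P Q) : FactorPair D1 D2 Q P :=
  let ⟨a, a', b, b', c, ha, ha', hb, hb', hc, hP, hQ⟩ := h
  ⟨a', a, b', b, c, ha', ha, hb', hb, hc, hQ, hP⟩

lemma FactorPair.sum_outer_eq (hn : D1 + D2 ≤ n) (h : FactorPair D1 D2 P Q)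
    (w : (Fin n → A) × (Fin n → B)) (v : Fin (n - D1 - D2) → C) :
    ∑ u, P w ((splitEquiv D1 D2 hn).symm (u, v))
      = ∑ u, Q w ((splitEquiv D1 D2 hn).symm (u, v)) := by
  obtain ⟨a, a', b, b', c, ha, ha', hb, hb', -, hP, hQ⟩ := h
  have blocks (u : (Fin D1 → C) × (Fin D2 → C)) := (splitEquiv D1 D2 hn).apply_symm_apply (u, v)
  have hfront (u) : frontOf D1 ((splitEquiv D1 D2 hn).symm (u, v)) = u.1 :=
    congrArg (·.1.1) (blocks u)
  have hback (u) : backOf D2 ((splitEquiv D1 D2 hn).symm (u, v)) = u.2 :=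
    congrArg (·.1.2) (blocks u)
  have hmid (u) : midOf D1 D2 ((splitEquiv (C := C) D1 D2 hn).symm (u, v)) = v :=
    congrArg (·.2) (blocks u)
  have outer (f : (Fin D1 → C) → ℝ) (g : (Fin D2 → C) → ℝ) (hf : IsPMF f) (hg : IsPMF g) :
      ∑ u : (Fin D1 → C) × (Fin D2 → C), f u.1 * g u.2 * c w v = c w v := by
    rw [← Finset.sum_mul, Fintype.sum_prod_type, ← Finset.sum_mul_sum, hf.2, hg.2, one_mul,
      one_mul]
  simp only [hP, hQ, hfront, hback, hmid, outer _ _ (ha w) (hb w), outer _ _ (ha' w) (hb' w)]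

variable [Fintype A] [Fintype B]

lemma FactorPair.info_le (hn : D1 + D2 ≤ n) (h : FactorPair D1 D2 P Q)
    (hP : ∀ w, IsPMF (P w)) (hQ : ∀ w, IsPMF (Q w)) {p : (Fin n → A) × (Fin n → B) → ℝ}
    (hp : IsPMF p) :
    jointInfo p P ≤ jointInfo p Q + (D1 + D2) * logb 2 (Fintype.card C) ∧
      condInfo p P ≤ condInfo p Q + (D1 + D2) * logb 2 (Fintype.card C) := by
  rw [← logb_card_blocks]
  exact ⟨jointInfo_le_add_logb_card _ hp hP hQ (h.sum_outer_eq hn),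
    condInfo_le_add_logb_card _ hp hP hQ (h.sum_outer_eq hn)⟩

end Factorization

section Region

open Pointwise

lemma mem_smul_Icc_zero_one {s : ℝ} (hs : 0 ≤ s) {w : ℝ × ℝ} (h1 : w.1 ∈ Set.Icc 0 s)
    (h2 : w.2 ∈ Set.Icc 0 s) : w ∈ s • Set.Icc ((0, 0) : ℝ × ℝ) (1, 1) := by
  rcases hs.eq_or_lt with rfl | hs
  · have : w = 0 := Prod.ext (le_antisymm h1.2 h1.1) (le_antisymm h2.2 h2.1)
    exact Set.mem_smul_set.mpr ⟨0, ⟨le_rfl, by norm_num [Prod.le_def]⟩, by simp [this]⟩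
  · have scale {t : ℝ} (ht : t ∈ Set.Icc 0 s) : s⁻¹ * t ∈ Set.Icc 0 1 :=
      ⟨mul_nonneg (inv_nonneg.2 hs.le) ht.1, inv_mul_le_one_of_le₀ ht.2 hs.le⟩
    exact Set.mem_smul_set.mpr ⟨s⁻¹ • w,
      ⟨⟨(scale h1).1, (scale h2).1⟩, ⟨(scale h1).2, (scale h2).2⟩⟩, smul_inv_smul₀ hs.ne' w⟩

variable {A B C Θ : Type*} [Fintype A] [Fintype B] [Fintype C]

lemma RegOf_subset_add_smul_Icc
    (Pk Qk : (n : ℕ) → Θ → ((Fin n → A) × (Fin n → B)) → (Fin n → C) → ℝ)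
    {n : ℕ} (hQk : ∀ θ xy, IsPMF (Qk n θ xy)) {δ : ℝ} (hδ : 0 ≤ δ)
    (hPQ : ∀ θ p, IsPMF p → jointInfo p (Pk n θ) ≤ jointInfo p (Qk n θ) + δ ∧
      condInfo p (Pk n θ) ≤ condInfo p (Qk n θ) + δ) :
    RegOf Pk n ⊆ RegOf Qk n + ((1 / n) * δ) • Set.Icc ((0, 0) : ℝ × ℝ) (1, 1) := by
  rintro R ⟨hR1, hR2, p, hp, hR⟩
  change ∀ θ, R.1 + R.2 ≤ 1 / n * jointInfo p (Pk n θ) ∧ R.2 ≤ 1 / n * condInfo p (Pk n θ) at hR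
  set s := 1 / (n : ℝ) * δ with hs_def
  have hs : 0 ≤ s := by positivity
  -- Lower `R.1 + R.2` and `R.2` by `s` each, staying in the nonnegative quadrant.
  set R' : ℝ × ℝ := (max (R.1 + R.2 - s) 0 - max (R.2 - s) 0, max (R.2 - s) 0)
  have hsum : R'.1 + R'.2 = max (R.1 + R.2 - s) 0 := sub_add_cancel _ _
  have hw : R - R' ∈ s • Set.Icc ((0, 0) : ℝ × ℝ) (1, 1) := by
    refine mem_smul_Icc_zero_one hs ⟨?_, ?_⟩ ⟨?_, ?_⟩ <;>
    simp only [Prod.fst_sub, Prod.snd_sub, R'] <;>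
    rcases max_cases (R.1 + R.2 - s) 0 with ⟨h, -⟩ | ⟨h, -⟩ <;>
    rcases max_cases (R.2 - s) 0 with ⟨h', -⟩ | ⟨h', -⟩ <;>
    linarith [le_max_left (R.1 + R.2 - s) 0, le_max_right (R.1 + R.2 - s) 0,
      le_max_left (R.2 - s) 0, le_max_right (R.2 - s) 0]
  have scaled (θ : Θ) : R.1 + R.2 ≤ 1 / n * jointInfo p (Qk n θ) + s ∧
      R.2 ≤ 1 / n * condInfo p (Qk n θ) + s := by
    have h := hPQ θ p hp
    have hn : 0 ≤ 1 / (n : ℝ) := by positivity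
    constructor
    · linarith [(hR θ).1, mul_le_mul_of_nonneg_left h.1 hn,
        mul_add (1 / (n : ℝ)) (jointInfo p (Qk n θ)) δ]
    · linarith [(hR θ).2, mul_le_mul_of_nonneg_left h.2 hn,
        mul_add (1 / (n : ℝ)) (condInfo p (Qk n θ)) δ]
  refine Set.mem_add.mpr ⟨R', ⟨?_, le_max_right _ _, p, hp, fun θ => ⟨?_, ?_⟩⟩, R - R', hw,
    add_sub_cancel R' R⟩
  · exact sub_nonneg.2 (max_le_max (by linarith) le_rfl)
  · change R'.1 + R'.2 ≤ 1 / n * jointInfo p (Qk n θ)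
    rw [hsum]
    exact max_le (by linarith [(scaled θ).1])
      (mul_nonneg (by positivity) (jointInfo_nonneg hp (hQk θ)))
  · change R'.2 ≤ 1 / n * condInfo p (Qk n θ)
    exact max_le (by linarith [(scaled θ).2])
      (mul_nonneg (by positivity) (condInfo_nonneg hp (hQk θ)))

end Region

end ACMACPaper

namespace ACMACPaper

open Pointwise

variable {A B C : Type*} [Fintype A] [Fintype B] [Fintype C] [Inhabited C]
  {Θ : Type*} [Fintype Θ]

/-- **Auxiliary lemma, quantitative form.** Under the block-factorization
hypothesis with a common middle-block law, the mutual informations under `P_θ`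
and `Q_θ` differ by at most `(D1+D2)·log|C|` (in both directions), and
consequently each region is contained in the other after fattening by
`(1/n)(D1+D2)log|C| · [0,1]²` (Minkowski sum). -/
theorem aux_lemma_bounds (D1 D2 : ℕ)
    (Pk Qk : (n : ℕ) → Θ → ((Fin n → A) × (Fin n → B)) → (Fin n → C) → ℝ)
    (hPk : ∀ n θ xy, IsPMF (Pk n θ xy)) (hQk : ∀ n θ xy, IsPMF (Qk n θ xy))
    (n : ℕ) (hn : D1 + D2 ≤ n)
    (hfac : ∀ θ : Θ, FactorPair D1 D2 (Pk n θ) (Qk n θ)) :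
    (∀ (θ : Θ) (p : ((Fin n → A) × (Fin n → B)) → ℝ), IsPMF p →
      (mutInfo (fun z : ((Fin n → A) × (Fin n → B)) × (Fin n → C) =>
            p z.1 * Pk n θ z.1 z.2)
          ≤ mutInfo (fun z : ((Fin n → A) × (Fin n → B)) × (Fin n → C) =>
            p z.1 * Qk n θ z.1 z.2)
            + ((D1 : ℝ) + (D2 : ℝ)) * Real.logb 2 (Fintype.card C)) ∧
      (condMutInfo (fun z : (Fin n → B) × (Fin n → C) × (Fin n → A) =>
            p (z.2.2, z.1) * Pk n θ (z.2.2, z.1) z.2.1)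
          ≤ condMutInfo (fun z : (Fin n → B) × (Fin n → C) × (Fin n → A) =>
            p (z.2.2, z.1) * Qk n θ (z.2.2, z.1) z.2.1)
            + ((D1 : ℝ) + (D2 : ℝ)) * Real.logb 2 (Fintype.card C)) ∧
      (mutInfo (fun z : ((Fin n → A) × (Fin n → B)) × (Fin n → C) =>
            p z.1 * Qk n θ z.1 z.2)
          ≤ mutInfo (fun z : ((Fin n → A) × (Fin n → B)) × (Fin n → C) =>
            p z.1 * Pk n θ z.1 z.2)
            + ((D1 : ℝ) + (D2 : ℝ)) * Real.logb 2 (Fintype.card C)) ∧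
      (condMutInfo (fun z : (Fin n → B) × (Fin n → C) × (Fin n → A) =>
            p (z.2.2, z.1) * Qk n θ (z.2.2, z.1) z.2.1)
          ≤ condMutInfo (fun z : (Fin n → B) × (Fin n → C) × (Fin n → A) =>
            p (z.2.2, z.1) * Pk n θ (z.2.2, z.1) z.2.1)
            + ((D1 : ℝ) + (D2 : ℝ)) * Real.logb 2 (Fintype.card C))) ∧
    RegOf Pk n ⊆ RegOf Qk n +
      ((1 / (n : ℝ)) * ((D1 : ℝ) + (D2 : ℝ)) * Real.logb 2 (Fintype.card C)) •
        Set.Icc ((0, 0) : ℝ × ℝ) (1, 1) ∧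
    RegOf Qk n ⊆ RegOf Pk n +
      ((1 / (n : ℝ)) * ((D1 : ℝ) + (D2 : ℝ)) * Real.logb 2 (Fintype.card C)) •
        Set.Icc ((0, 0) : ℝ × ℝ) (1, 1) := by
  have hδ : 0 ≤ ((D1 : ℝ) + D2) * logb 2 (Fintype.card C) :=
    mul_nonneg (by positivity) (logb_nonneg one_lt_two (by exact_mod_cast Fintype.card_pos))
  have hPQ θ p (hp : IsPMF p) := (hfac θ).info_le hn (hPk n θ) (hQk n θ) hp
  have hQP θ p (hp : IsPMF p) := (hfac θ).symm.info_le hn (hQk n θ) (hPk n θ) hp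
  refine ⟨fun θ p hp => ⟨(hPQ θ p hp).1, (hPQ θ p hp).2, (hQP θ p hp).1, (hQP θ p hp).2⟩, ?_, ?_⟩
  · rw [mul_assoc]
    exact RegOf_subset_add_smul_Icc Pk Qk (hQk n) hδ hPQ
  · rw [mul_assoc]
    exact RegOf_subset_add_smul_Icc Qk Pk (hPk n) hδ hQP

end ACMACPaper
end
end

section
/- For the synchronous cognitive MAC (CMAC, i.e., the ACMAC with D = {0}) defined by X1 = {2, 4}, X2 = Y = {0, 1, 2, 3}, and the deterministic channel Y = X2 mod X1, the capacity region is the triangle {(R1, R2) : R1, R2 ≥ 0, R1 + R2 ≤ 2} (rates in bits); moreover this region is also the capacity region of the ACMAC for this channel for every finite bounded delay set D. -/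
open scoped BigOperators
open Real

noncomputable section

namespace ACMACPaper

/-- The input alphabet `X1 = {2, 4}` of the example channel. -/
abbrev X1ex : Type := ↥({2, 4} : Finset ℕ)

instance : Inhabited X1ex := ⟨⟨2, by decide⟩⟩

/-- The deterministic output `y = x2 mod x1` of the example channel
(`x1 ∈ {2,4}`, `x2, y ∈ {0,1,2,3}`). -/
def outEx (x1 : X1ex) (x2 : Fin 4) : Fin 4 :=
  ⟨(x2 : ℕ) % (x1 : ℕ), lt_of_le_of_lt (Nat.mod_le _ _) x2.isLt⟩

/-- The example channel `Y = X2 mod X1` as a transition pmf. -/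
def Wex (x1 : X1ex) (x2 : Fin 4) (y : Fin 4) : ℝ :=
  if y = outEx x1 x2 then 1 else 0

end ACMACPaper

namespace ACMACPaper

/-! With `x1 = 4` the channel is the noiseless quaternary channel `y = x2`, so two bits per
use go through without error. Under a delay the informed encoder only has to send `0` in the
first `dmax` and last `dmin` slots, where `x1` may be out of range; `0 mod x1 = 0` whatever
`x1` is, so every delay in `D` produces the same output and the code remains error-free. The
converse holds for any channel: a decoder can decode correctly for at most `|Y|ⁿ` message
pairs, so `2^{n(R1+R2)} (1 - ε) ≤ |Y|ⁿ`. -/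

section GeneralChannel

variable {X1 X2 Y : Type*} [Inhabited X1]

lemma IsPMF.le_one {α : Type*} [Fintype α] {p : α → ℝ} (hp : IsPMF p) (a : α) : p a ≤ 1 :=
  hp.2 ▸ Finset.single_le_sum (fun b _ => hp.1 b) (Finset.mem_univ a)

lemma isPMF_ite_eq [Fintype Y] [DecidableEq Y] (y₀ : Y) :
    IsPMF fun y => if y = y₀ then (1 : ℝ) else 0 :=
  ⟨fun _ => ite_nonneg zero_le_one le_rfl, by simp⟩

lemma isPMF_blockLaw [Fintype Y] {W : X1 → X2 → Y → ℝ} (hW : ∀ a b, IsPMF (W a b)) (d : ℤ)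
    {n : ℕ} (x1 : Fin n → X1) (x2 : Fin n → X2) : IsPMF (blockLaw W d x1 x2) := by
  refine ⟨fun y => Finset.prod_nonneg fun i _ => (hW _ _).1 _, ?_⟩
  simp only [blockLaw]
  rw [← Fintype.prod_sum fun (i : Fin n) y => W (extVec x1 ((i : ℕ) - d)) (x2 i) y]
  simp [(hW _ _).2]

lemma card_mul_one_sub_avgErr_le [Fintype Y] {W : X1 → X2 → Y → ℝ}
    (hW : ∀ a b, IsPMF (W a b)) (d : ℤ) {n K1 K2 : ℕ} (f1 : Fin K1 → Fin n → X1)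
    (f2 : Fin K1 → Fin K2 → Fin n → X2)
    (g : (Fin n → Y) → Fin K1 × Fin K2) :
    ((K1 : ℝ) * K2) * (1 - avgErr W d f1 f2 g) ≤ (Fintype.card Y : ℝ) ^ n := by
  set P : Fin K1 × Fin K2 → (Fin n → Y) → ℝ := fun p => blockLaw W d (f1 p.1) (f2 p.1 p.2)
  have hP : ∀ p, IsPMF (P p) := fun p => isPMF_blockLaw hW d _ _
  rcases eq_or_ne ((K1 : ℝ) * K2) 0 with hK | hK
  · rw [hK, zero_mul]
    positivity
  have herr : ((K1 : ℝ) * K2) * avgErr W d f1 f2 g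
      = ∑ p, ∑ y, if g y ≠ p then P p y else 0 := by
    rw [avgErr, ← mul_assoc, mul_one_div_cancel hK, one_mul]
    exact (Fintype.sum_prod_type' _).symm
  have hcard : ((K1 : ℝ) * K2) = ∑ p, ∑ y, P p y := by simp [(hP _).2]
  calc ((K1 : ℝ) * K2) * (1 - avgErr W d f1 f2 g)
        = ∑ p, (∑ y, P p y - ∑ y, if g y ≠ p then P p y else 0) := by
        rw [mul_one_sub, herr, hcard, Finset.sum_sub_distrib]
    _ = ∑ p, ∑ y, if g y = p then P p y else 0 := by
        refine Finset.sum_congr rfl fun p _ => ?_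
        rw [← Finset.sum_sub_distrib]
        refine Finset.sum_congr rfl fun y _ => ?_
        split_ifs <;> simp_all
    _ = ∑ y, P (g y) y := by
        rw [Finset.sum_comm]
        simp only [Finset.sum_ite_eq, Finset.mem_univ, if_true]
    _ ≤ ∑ _y : Fin n → Y, (1 : ℝ) := Finset.sum_le_sum fun y _ => (hP _).le_one y
    _ = (Fintype.card Y : ℝ) ^ n := by simp

lemma sum_rate_le_logb_card [Fintype Y] [Inhabited X2] {W : X1 → X2 → Y → ℝ}
    (hW : ∀ a b, IsPMF (W a b)) {dmin dmax : ℕ} {R : ℝ × ℝ} (hR : ACMACAchievable W dmin dmax R) :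
    R.1 + R.2 ≤ Real.logb 2 (Fintype.card Y) := by
  obtain ⟨-, -, hach⟩ := hR
  obtain ⟨d, hd⟩ := delaySet_nonempty dmin dmax
  have hY : (0 : ℝ) < Fintype.card Y := by
    have : Nonempty Y := by
      by_contra hY
      simpa [not_nonempty_iff.mp hY] using (hW default default).2
    exact_mod_cast Fintype.card_pos
  refine le_of_forall_pos_le_add fun δ hδ => ?_
  have hδ' : (2 : ℝ) ^ (-δ) < 1 := Real.rpow_lt_one_of_one_lt_of_neg one_lt_two (by linarith)
  obtain ⟨n, K1, K2, f1, f2, g, hn, hK1, hK2, herr⟩ := hach (1 - 2 ^ (-δ)) (by linarith)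
  have hbound : (2 : ℝ) ^ (-δ + n * (R.1 + R.2)) ≤ 2 ^ (n * Real.logb 2 (Fintype.card Y)) :=
    calc (2 : ℝ) ^ (-δ + n * (R.1 + R.2)) = 2 ^ (-δ) * (2 ^ (n * R.1) * 2 ^ (n * R.2)) := by
          rw [mul_add, Real.rpow_add two_pos, Real.rpow_add two_pos]
      _ ≤ (1 - avgErr W d f1 f2 g) * ((K1 : ℝ) * K2) := by
          have := Real.rpow_pos_of_pos two_pos (-δ)
          gcongr <;> linarith [herr d hd]
      _ ≤ (Fintype.card Y : ℝ) ^ n := by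
          linarith [card_mul_one_sub_avgErr_le hW d f1 f2 g]
      _ = 2 ^ (n * Real.logb 2 (Fintype.card Y)) := by
          rw [mul_comm, Real.rpow_mul zero_le_two, Real.rpow_logb two_pos (by norm_num) hY,
            Real.rpow_natCast]
  have hexp := (Real.rpow_le_rpow_left_iff one_lt_two).mp hbound
  have hn' : (1 : ℝ) ≤ n := by exact_mod_cast hn
  rcases le_or_gt (R.1 + R.2) (Real.logb 2 (Fintype.card Y)) with hle | hgt
  · linarith
  · nlinarith

lemma blockLaw_deterministic [DecidableEq Y] (φ : X1 → X2 → Y) (d : ℤ) {n : ℕ}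
    (x1 : Fin n → X1) (x2 : Fin n → X2) (y : Fin n → Y) :
    blockLaw (fun a b y => if y = φ a b then 1 else 0) d x1 x2 y
      = if y = (fun i : Fin n => φ (extVec x1 ((i : ℕ) - d)) (x2 i)) then 1 else 0 := by
  simp only [blockLaw, funext_iff, Finset.prod_ite_zero, Finset.prod_const_one, Finset.mem_univ,
    true_implies]

lemma avgErr_deterministic_eq_zero [Fintype Y] [DecidableEq Y] (φ : X1 → X2 → Y) (d : ℤ)
    {n K1 K2 : ℕ} (f1 : Fin K1 → Fin n → X1) (f2 : Fin K1 → Fin K2 → Fin n → X2)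
    (g : (Fin n → Y) → Fin K1 × Fin K2)
    (hg : ∀ m1 m2,
      g (fun i : Fin n => φ (extVec (f1 m1) ((i : ℕ) - d)) (f2 m1 m2 i)) = (m1, m2)) :
    avgErr (fun a b y => if y = φ a b then 1 else 0) d f1 f2 g = 0 := by
  refine mul_eq_zero_of_right _ (Finset.sum_eq_zero fun m1 _ => Finset.sum_eq_zero fun m2 _ =>
    Finset.sum_eq_zero fun y _ => ?_)
  rw [blockLaw_deterministic]
  split_ifs <;> simp_all

end GeneralChannel

lemma closure_eq_sumRate_triangle {A : Set (ℝ × ℝ)} {c : ℝ} (hc : 0 < c)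
    (hlow : ∀ R : ℝ × ℝ, 0 ≤ R.1 → 0 ≤ R.2 → R.1 + R.2 < c → R ∈ A)
    (hup : A ⊆ {R : ℝ × ℝ | 0 ≤ R.1 ∧ 0 ≤ R.2 ∧ R.1 + R.2 ≤ c}) :
    closure A = {R : ℝ × ℝ | 0 ≤ R.1 ∧ 0 ≤ R.2 ∧ R.1 + R.2 ≤ c} := by
  refine (closure_minimal hup ?_).antisymm fun R ⟨h1, h2, hs⟩ => ?_
  · exact (isClosed_le continuous_const continuous_fst).inter
      ((isClosed_le continuous_const continuous_snd).inter
        (isClosed_le (continuous_fst.add continuous_snd) continuous_const))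
  · have hlim : Filter.Tendsto (fun t : ℝ => t • R) (nhdsWithin 1 (Set.Iio 1)) (nhds R) := by
      simpa using
        ((Filter.tendsto_id (x := nhds (1 : ℝ))).smul_const R).mono_left nhdsWithin_le_nhds
    refine mem_closure_of_tendsto hlim ?_
    filter_upwards [Ioo_mem_nhdsLT (zero_lt_one' ℝ)] with t ⟨ht0, ht1⟩
    refine hlow _ (mul_nonneg ht0.le h1) (mul_nonneg ht0.le h2) ?_
    change t * R.1 + t * R.2 < c
    nlinarith

def guardPad (dmin dmax n : ℕ) (w : Fin (n - (dmin + dmax)) → Fin 4) : Fin n → Fin 4 :=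
  fun i => if h : dmax ≤ (i : ℕ) ∧ (i : ℕ) + dmin < n then w ⟨i - dmax, by omega⟩ else 0

lemma guardPad_injective (dmin dmax n : ℕ) : Function.Injective (guardPad dmin dmax n) := by
  intro w w' h
  funext j
  have hj := congrFun h ⟨dmax + j, by omega⟩
  simp only [guardPad, dif_pos (show dmax ≤ dmax + (j : ℕ) ∧ dmax + (j : ℕ) + dmin < n by omega),
    Nat.add_sub_cancel_left] at hj
  exact hj

lemma outEx_four (x2 : Fin 4) : outEx ⟨4, by decide⟩ x2 = x2 :=
  Fin.ext (Nat.mod_eq_of_lt x2.isLt)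

lemma outEx_zero (x1 : X1ex) : outEx x1 0 = 0 :=
  Fin.ext (Nat.zero_mod _)

lemma outEx_guardPad {dmin dmax n : ℕ} (w : Fin (n - (dmin + dmax)) → Fin 4) {d : ℤ}
    (hd : d ∈ delaySet dmin dmax) :
    (fun i : Fin n => outEx (extVec (fun _ : Fin n => ⟨4, by decide⟩) ((i : ℕ) - d))
      (guardPad dmin dmax n w i)) = guardPad dmin dmax n w := by
  rw [delaySet, Finset.mem_Icc] at hd
  funext i
  by_cases h : dmax ≤ (i : ℕ) ∧ (i : ℕ) + dmin < n
  · rw [extVec, dif_pos (by omega), outEx_four]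
  · rw [guardPad, dif_neg h, outEx_zero]

lemma exists_code_Wex_avgErr_eq_zero (dmin dmax n : ℕ) {K1 K2 : ℕ} [NeZero K1] [NeZero K2]
    (hK : K1 * K2 ≤ 4 ^ (n - (dmin + dmax))) :
    ∃ (f1 : Fin K1 → Fin n → X1ex) (f2 : Fin K1 → Fin K2 → Fin n → Fin 4)
      (g : (Fin n → Fin 4) → Fin K1 × Fin K2),
      ∀ d ∈ delaySet dmin dmax, avgErr Wex d f1 f2 g = 0 := by
  obtain ⟨enc⟩ := Function.Embedding.nonempty_of_card_le
    (α := Fin K1 × Fin K2) (β := Fin (n - (dmin + dmax)) → Fin 4) (by simpa using hK)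
  set F := fun p => guardPad dmin dmax n (enc p)
  have hF : Function.Injective F := (guardPad_injective dmin dmax n).comp enc.injective
  refine ⟨fun _ _ => ⟨4, by decide⟩, fun m1 m2 => F (m1, m2), Function.invFun F,
    fun d hd => avgErr_deterministic_eq_zero outEx d _ _ _ fun m1 m2 => ?_⟩
  rw [outEx_guardPad _ hd]
  exact Function.leftInverse_invFun hF (m1, m2)

lemma exists_blocklength_of_sum_lt_two {R1 R2 : ℝ} (h1 : 0 ≤ R1) (h2 : 0 ≤ R2)
    (hs : R1 + R2 < 2) (B : ℕ) :
    ∃ n a1 a2 : ℕ, 0 < n ∧ n * R1 ≤ a1 ∧ n * R2 ≤ a2 ∧ a1 + a2 ≤ 2 * (n - B) := by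
  obtain ⟨n, hn⟩ := exists_nat_ge ((2 * B + 2) / (2 - (R1 + R2)))
  rw [div_le_iff₀ (by linarith)] at hn
  refine ⟨n + B + 1, ⌈(n + B + 1 : ℕ) * R1⌉₊, ⌈(n + B + 1 : ℕ) * R2⌉₊, by omega,
    Nat.le_ceil _, Nat.le_ceil _, ?_⟩
  have hc1 := Nat.ceil_lt_add_one (mul_nonneg (Nat.cast_nonneg (n + B + 1)) h1)
  have hc2 := Nat.ceil_lt_add_one (mul_nonneg (Nat.cast_nonneg (n + B + 1)) h2)
  rw [show n + B + 1 - B = n + 1 by omega]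
  have : ((⌈(n + B + 1 : ℕ) * R1⌉₊ + ⌈(n + B + 1 : ℕ) * R2⌉₊ : ℕ) : ℝ) < 2 * (n + 1 : ℕ) := by
    push_cast at hc1 hc2 ⊢
    nlinarith
  exact_mod_cast this.le

lemma achievable_Wex_of_sum_lt (dmin dmax : ℕ) {R : ℝ × ℝ} (h1 : 0 ≤ R.1) (h2 : 0 ≤ R.2)
    (hs : R.1 + R.2 < 2) : ACMACAchievable Wex dmin dmax R := by
  obtain ⟨n, a1, a2, hn, ha1, ha2, hbits⟩ := exists_blocklength_of_sum_lt_two h1 h2 hs (dmin + dmax)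
  obtain ⟨f1, f2, g, hzero⟩ := exists_code_Wex_avgErr_eq_zero dmin dmax n (K1 := 2 ^ a1)
    (K2 := 2 ^ a2) (by rw [← pow_add, show 4 = 2 ^ 2 by rfl, ← pow_mul]; gcongr; norm_num)
  have hrate : ∀ {x : ℝ} {a : ℕ}, x ≤ a → (2 : ℝ) ^ x ≤ ((2 ^ a : ℕ) : ℝ) := fun h => by
    rw [Nat.cast_pow, Nat.cast_ofNat, ← Real.rpow_natCast]
    exact Real.rpow_le_rpow_of_exponent_le one_le_two h
  exact ⟨h1, h2, fun ε hε => ⟨n, _, _, f1, f2, g, hn, hrate ha1, hrate ha2,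
    fun d hd => (hzero d hd).trans_le hε.le⟩⟩

lemma capacity_Wex (dmin dmax : ℕ) :
    ACMACCapacity Wex dmin dmax = {R : ℝ × ℝ | 0 ≤ R.1 ∧ 0 ≤ R.2 ∧ R.1 + R.2 ≤ 2} := by
  refine closure_eq_sumRate_triangle two_pos
    (fun R h1 h2 hs => achievable_Wex_of_sum_lt dmin dmax h1 h2 hs) fun R hR => ?_
  have hlog : Real.logb 2 (Fintype.card (Fin 4)) = 2 := by
    rw [Fintype.card_fin, Nat.cast_ofNat, show (4 : ℝ) = 2 ^ (2 : ℝ) by norm_num,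
      Real.logb_rpow two_pos (by norm_num)]
  exact ⟨hR.1, hR.2.1, hlog ▸ sum_rate_le_logb_card (fun a b => isPMF_ite_eq (outEx a b)) hR⟩

/-- **Example (CMAC side).** For the channel `Y = X2 mod X1` with
`X1 = {2,4}`, `X2 = Y = {0,1,2,3}`, the capacity region of the synchronous
cognitive MAC (the ACMAC with `D = {0}`) is the triangle
`{(R1,R2) : R1,R2 ≥ 0, R1+R2 ≤ 2}` (bits), and this is also the capacity
region of the ACMAC for every finite bounded delay set. -/
theorem example_cmac_capacity :
    ACMACCapacity Wex 0 0 = {R : ℝ × ℝ | 0 ≤ R.1 ∧ 0 ≤ R.2 ∧ R.1 + R.2 ≤ 2} ∧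
    ∀ dmin dmax : ℕ,
      ACMACCapacity Wex dmin dmax
        = {R : ℝ × ℝ | 0 ≤ R.1 ∧ 0 ≤ R.2 ∧ R.1 + R.2 ≤ 2} :=
  ⟨capacity_Wex 0 0, capacity_Wex⟩

end ACMACPaper
end
end

section
/- For the synchronous codeword-cognitive MAC (CC-MAC, i.e., the ACC-MAC with D = {0}) defined by X1 = {2, 4}, X2 = Y = {0, 1, 2, 3}, and the deterministic channel Y = X2 mod X1, the capacity region is the trapezoid {(R1, R2) : R1, R2 ≥ 0, R1 ≤ 1, R1 + R2 ≤ 2} (rates in bits); this region coincides with the capacity region of the same channel with no side-information at either transmitter, and it is also the capacity region of the ACC-MAC for this channel for every finite bounded delay set D. -/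
/-!
The channel is deterministic, so a code errs exactly on the message pairs it decodes wrongly.

Converse: the correctly decoded pairs inject into the output words (at most `4^n`), and, since
with codeword cognition the output is a function of user 1's codeword and user 2's message, also
into those pairs (at most `2^n K2`). Hence `R1 ≤ 1` and `R1 + R2 ≤ 2`.

Achievability, even without cognition and for every delay set: user 2 sends `2 hi + lo`. The bit
`lo` always gets through, since `(2 hi + lo) mod x1 ≡ lo (mod 2)`. With `hi = 1` the output also
shows whether `x1 = 4`, so user 1 sends its bits as `2`/`4` after a marker from which the receiver
reads off the delay; in a final window where user 1 sends `4` under every delay, user 2 sends `hi`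
too. With overhead `O(dmin + dmax)` this gives the rates `(k/n, (n+m)/n)`, which approach every
point of the trapezoid.
-/
open scoped BigOperators
open Real

noncomputable section

namespace ACMACPaper

variable {X1 X2 Y : Type*} [Fintype X1] [Fintype X2] [Fintype Y]
  [Inhabited X1] [Inhabited X2]

/-- Achievability for the ACC-MAC: the informed encoder knows the *codeword*
of the uninformed user (its encoder is a map `X1^n × M2 → X2^n`), not its
message. -/
def ACCMACAchievable (W : X1 → X2 → Y → ℝ) (dmin dmax : ℕ) (R : ℝ × ℝ) : Prop :=
  0 ≤ R.1 ∧ 0 ≤ R.2 ∧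
  ∀ ε : ℝ, 0 < ε → ∃ (n K1 K2 : ℕ) (f1 : Fin K1 → Fin n → X1)
    (f2 : (Fin n → X1) → Fin K2 → Fin n → X2) (g : (Fin n → Y) → Fin K1 × Fin K2),
      0 < n ∧ (2 : ℝ) ^ ((n : ℝ) * R.1) ≤ (K1 : ℝ) ∧
      (2 : ℝ) ^ ((n : ℝ) * R.2) ≤ (K2 : ℝ) ∧
      ∀ d ∈ delaySet dmin dmax, avgErr W d f1 (fun m1 m2 => f2 (f1 m1) m2) g ≤ ε

/-- The capacity region of the ACC-MAC. -/
def ACCMACCapacity (W : X1 → X2 → Y → ℝ) (dmin dmax : ℕ) : Set (ℝ × ℝ) :=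
  closure {R | ACCMACAchievable W dmin dmax R}

end ACMACPaper

namespace ACMACPaper

variable {X1 X2 Y : Type*} [Fintype X1] [Fintype X2] [Fintype Y]
  [Inhabited X1] [Inhabited X2]

/-- Achievability for the non-cognitive (asynchronous) MAC: the second encoder
depends only on its own message. -/
def MACAchievable (W : X1 → X2 → Y → ℝ) (dmin dmax : ℕ) (R : ℝ × ℝ) : Prop :=
  0 ≤ R.1 ∧ 0 ≤ R.2 ∧
  ∀ ε : ℝ, 0 < ε → ∃ (n K1 K2 : ℕ) (f1 : Fin K1 → Fin n → X1)
    (f2 : Fin K2 → Fin n → X2) (g : (Fin n → Y) → Fin K1 × Fin K2),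
      0 < n ∧ (2 : ℝ) ^ ((n : ℝ) * R.1) ≤ (K1 : ℝ) ∧
      (2 : ℝ) ^ ((n : ℝ) * R.2) ≤ (K2 : ℝ) ∧
      ∀ d ∈ delaySet dmin dmax, avgErr W d f1 (fun _ m2 => f2 m2) g ≤ ε

/-- Capacity region of the non-cognitive MAC. -/
def MACCapacity (W : X1 → X2 → Y → ℝ) (dmin dmax : ℕ) : Set (ℝ × ℝ) :=
  closure {R | MACAchievable W dmin dmax R}

end ACMACPaper

namespace ACMACPaper

open Finset Filter Topology

lemma card_filter_leftInverse_le {α β : Type*} [Fintype α] [Fintype β] [DecidableEq α]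
    (ψ : α → β) (G : β → α) : #{p | G (ψ p) = p} ≤ Fintype.card β := by
  refine (card_le_card_of_injOn ψ (fun _ _ => mem_coe.2 (mem_univ _)) ?_).trans_eq card_univ
  intro p hp q hq hpq
  rw [← (mem_filter.1 (mem_coe.1 hp)).2, ← (mem_filter.1 (mem_coe.1 hq)).2, hpq]

lemma le_logb_of_forall_one_sub_mul_le_pow {R b : ℝ} (hb : 0 < b)
    (h : ∀ ε : ℝ, 0 < ε → ε < 1 → ∃ n : ℕ, 0 < n ∧ (1 - ε) * 2 ^ (n * R) ≤ b ^ n) :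
    R ≤ logb 2 b := by
  by_contra! hlt
  set a := R - logb 2 b with ha
  have hbound : ∀ ε ∈ Set.Ioo (0 : ℝ) 1, (1 - ε) * 2 ^ a ≤ 1 := by
    rintro ε ⟨hε0, hε1⟩
    obtain ⟨n, hn, hle⟩ := h ε hε0 hε1
    have hbn : b ^ n = 2 ^ (n * logb 2 b) := by
      rw [mul_comm, Real.rpow_mul_natCast zero_le_two, Real.rpow_logb two_pos (by norm_num) hb]
    have hsplit : (2 : ℝ) ^ (n * R) = 2 ^ (n * logb 2 b) * 2 ^ (n * a) := by
      rw [← Real.rpow_add two_pos, ha]; ring_nf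
    have hmono : (2 : ℝ) ^ a ≤ 2 ^ (n * a) :=
      Real.rpow_le_rpow_of_exponent_le one_le_two
        (le_mul_of_one_le_left (by linarith) (by exact_mod_cast hn))
    have hpos : (0 : ℝ) < 2 ^ (n * logb 2 b) := by positivity
    rw [hbn, hsplit] at hle
    have := mul_le_mul_of_nonneg_left hmono (sub_nonneg.2 hε1.le)
    nlinarith
  have hlim : Tendsto (fun ε : ℝ => (1 - ε) * 2 ^ a) (𝓝[>] 0) (𝓝 (2 ^ a)) := by
    have hcont : Continuous fun ε : ℝ => (1 - ε) * 2 ^ a := by fun_prop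
    simpa using (hcont.tendsto 0).mono_left nhdsWithin_le_nhds
  have : (2 : ℝ) ^ a ≤ 1 := le_of_tendsto hlim (mem_of_superset (Ioo_mem_nhdsGT one_pos) hbound)
  exact this.not_gt (Real.one_lt_rpow one_lt_two (by linarith))

lemma exists_decoder_of_injective {δ α γ : Type*} [Nonempty δ] [Nonempty α] (F : δ → α → γ)
    {D : Set δ} (hF : ∀ d ∈ D, ∀ d' ∈ D, ∀ p p', F d p = F d' p' → p = p') :
    ∃ g : γ → α, ∀ d ∈ D, ∀ p, g (F d p) = p := by
  let F' : δ × α → γ := fun q => F q.1 q.2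
  refine ⟨fun y => (Function.invFunOn F' (D ×ˢ Set.univ) y).2, fun d hd p => ?_⟩
  have hex : ∃ q ∈ D ×ˢ Set.univ, F' q = F d p := ⟨(d, p), ⟨hd, trivial⟩, rfl⟩
  exact hF _ (Function.invFunOn_mem hex).1 d hd _ _ (Function.invFunOn_eq hex)

def trapezoid (a b : ℝ) : Set (ℝ × ℝ) := {R | 0 ≤ R.1 ∧ 0 ≤ R.2 ∧ R.1 ≤ a ∧ R.1 + R.2 ≤ b}

lemma isClosed_trapezoid (a b : ℝ) : IsClosed (trapezoid a b) :=
  (isClosed_le continuous_const continuous_fst).inter <|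
    (isClosed_le continuous_const continuous_snd).inter <|
      (isClosed_le continuous_fst continuous_const).inter
        (isClosed_le (continuous_fst.add continuous_snd) continuous_const)

lemma trapezoid_subset_closure {a b : ℝ} (ha : 0 < a) (hb : 0 < b) {S : Set (ℝ × ℝ)}
    (hS : ∀ R : ℝ × ℝ, 0 ≤ R.1 → 0 ≤ R.2 → R.1 < a → R.1 + R.2 < b → R ∈ S) :
    trapezoid a b ⊆ closure S := by
  rintro R ⟨h1, h2, h3, h4⟩
  have hlim : Tendsto (fun s : ℝ => s • R) (𝓝[<] 1) (𝓝 R) := by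
    have hcont : Continuous fun s : ℝ => s • R := by fun_prop
    simpa using (hcont.tendsto 1).mono_left nhdsWithin_le_nhds
  refine mem_closure_of_tendsto hlim ?_
  filter_upwards [Ioo_mem_nhdsLT one_pos] with s ⟨hs0, hs1⟩
  refine hS _ (by simp only [Prod.smul_fst, smul_eq_mul]; positivity)
    (by simp only [Prod.smul_snd, smul_eq_mul]; positivity) ?_ ?_ <;>
    simp only [Prod.smul_fst, Prod.smul_snd, smul_eq_mul] <;> nlinarith

theorem MACAchievable.toACCMACAchievable {X1 X2 Y : Type*} [Fintype Y] [Inhabited X1]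
    {W : X1 → X2 → Y → ℝ} {dmin dmax : ℕ} {R : ℝ × ℝ} (h : MACAchievable W dmin dmax R) :
    ACCMACAchievable W dmin dmax R := by
  obtain ⟨hR1, hR2, hcode⟩ := h
  refine ⟨hR1, hR2, fun ε hε => ?_⟩
  obtain ⟨n, K1, K2, f1, f2, g, hn, hK1, hK2, herr⟩ := hcode ε hε
  exact ⟨n, K1, K2, f1, fun _ => f2, g, hn, hK1, hK2, herr⟩

section Deterministic

variable {X1 X2 Y : Type*} [DecidableEq Y] [Inhabited X1]

def detChannel (φ : X1 → X2 → Y) : X1 → X2 → Y → ℝ :=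
  fun x1 x2 y => if y = φ x1 x2 then 1 else 0

def detOutput (φ : X1 → X2 → Y) (d : ℤ) {n : ℕ} (x1 : Fin n → X1) (x2 : Fin n → X2) :
    Fin n → Y :=
  fun i => φ (extVec x1 ((i : ℕ) - d)) (x2 i)

lemma blockLaw_detChannel (φ : X1 → X2 → Y) (d : ℤ) {n : ℕ} (x1 : Fin n → X1)
    (x2 : Fin n → X2) (y : Fin n → Y) :
    blockLaw (detChannel φ) d x1 x2 y = if y = detOutput φ d x1 x2 then 1 else 0 := by
  simp only [blockLaw, detChannel, prod_boole, mem_univ, true_implies, funext_iff, detOutput]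

variable [Fintype Y]

lemma avgErr_detChannel (φ : X1 → X2 → Y) (d : ℤ) {n K1 K2 : ℕ} (f1 : Fin K1 → Fin n → X1)
    (f2 : Fin K1 → Fin K2 → Fin n → X2) (g : (Fin n → Y) → Fin K1 × Fin K2) :
    avgErr (detChannel φ) d f1 f2 g
      = #{p | g (detOutput φ d (f1 p.1) (f2 p.1 p.2)) ≠ p} / ((K1 : ℝ) * K2) := by
  have hy (p : Fin K1 × Fin K2) (y₀ : Fin n → Y) :
      ∑ y, (if g y ≠ p then (if y = y₀ then (1 : ℝ) else 0) else 0) = if g y₀ ≠ p then 1 else 0 :=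
    (Fintype.sum_eq_single y₀ fun y hy => by simp [hy]).trans (by simp)
  simp only [avgErr, blockLaw_detChannel, hy]
  rw [← Fintype.sum_prod_type', sum_boole, one_div_mul_eq_div]

theorem MACAchievable_of_zeroError (φ : X1 → X2 → Y) {dmin dmax n : ℕ} (hn : 0 < n)
    {M1 M2 : Type*} [Fintype M1] [Fintype M2] {R : ℝ × ℝ} (hR1 : 0 ≤ R.1) (hR2 : 0 ≤ R.2)
    (h1 : (2 : ℝ) ^ (n * R.1) ≤ Fintype.card M1) (h2 : (2 : ℝ) ^ (n * R.2) ≤ Fintype.card M2)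
    (e1 : M1 → Fin n → X1) (e2 : M2 → Fin n → X2) (g : (Fin n → Y) → M1 × M2)
    (hg : ∀ d ∈ delaySet dmin dmax, ∀ m1 m2, g (detOutput φ d (e1 m1) (e2 m2)) = (m1, m2)) :
    MACAchievable (detChannel φ) dmin dmax R := by
  let i1 := Fintype.equivFin M1
  let i2 := Fintype.equivFin M2
  refine ⟨hR1, hR2, fun ε hε => ⟨n, _, _, e1 ∘ i1.symm, e2 ∘ i2.symm,
    fun y => Prod.map i1 i2 (g y), hn, h1, h2, fun d hd => ?_⟩⟩
  simp [avgErr_detChannel, hg d hd, hε.le]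

variable [Fintype X1]

/-- The correctly decoded message pairs inject into the outputs, and also into the pairs
(codeword of user 1, message of user 2), on which the output of a codeword-cognitive code
depends. -/
lemma one_sub_mul_card_le (φ : X1 → X2 → Y) (d : ℤ) {n K1 K2 : ℕ} (hK1 : 0 < K1) (hK2 : 0 < K2)
    (f1 : Fin K1 → Fin n → X1) (f2 : (Fin n → X1) → Fin K2 → Fin n → X2)
    (g : (Fin n → Y) → Fin K1 × Fin K2) {ε : ℝ}
    (herr : avgErr (detChannel φ) d f1 (fun m1 m2 => f2 (f1 m1) m2) g ≤ ε) :
    (1 - ε) * (K1 * K2) ≤ Fintype.card X1 ^ n * K2 ∧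
      (1 - ε) * (K1 * K2) ≤ Fintype.card Y ^ n := by
  set out : Fin K1 × Fin K2 → Fin n → Y := fun p => detOutput φ d (f1 p.1) (f2 (f1 p.1) p.2)
  have hK : (0 : ℝ) < K1 * K2 := by positivity
  have hcorrect : (1 - ε) * (K1 * K2) ≤ #{p | g (out p) = p} := by
    have hsplit := card_filter_add_card_filter_not (s := univ) (fun p => g (out p) = p)
    rw [card_univ, Fintype.card_prod, Fintype.card_fin, Fintype.card_fin] at hsplit
    rw [avgErr_detChannel, div_le_iff₀ hK] at herr
    have : (#{p | g (out p) = p} : ℝ) + #{p | ¬g (out p) = p} = K1 * K2 := by exact_mod_cast hsplit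
    linarith
  constructor
  · calc (1 - ε) * (K1 * K2) ≤ #{p | g (out p) = p} := hcorrect
      _ ≤ (Fintype.card ((Fin n → X1) × Fin K2) : ℝ) := by
        exact_mod_cast card_filter_leftInverse_le (fun p => (f1 p.1, p.2))
          (fun q => g (detOutput φ d q.1 (f2 q.1 q.2)))
      _ = _ := by simp
  · calc (1 - ε) * (K1 * K2) ≤ #{p | g (out p) = p} := hcorrect
      _ ≤ (Fintype.card (Fin n → Y) : ℝ) := by exact_mod_cast card_filter_leftInverse_le out g
      _ = _ := by simp

theorem ACCMACAchievable.mem_trapezoid [Nonempty Y] (φ : X1 → X2 → Y) {dmin dmax : ℕ}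
    {R : ℝ × ℝ} (hR : ACCMACAchievable (detChannel φ) dmin dmax R) :
    R ∈ trapezoid (logb 2 (Fintype.card X1)) (logb 2 (Fintype.card Y)) := by
  obtain ⟨hR1, hR2, hcode⟩ := hR
  obtain ⟨d, hd⟩ := delaySet_nonempty dmin dmax
  have key : ∀ ε : ℝ, 0 < ε → ε < 1 → ∃ n : ℕ, 0 < n ∧
      (1 - ε) * 2 ^ (n * R.1) ≤ (Fintype.card X1 : ℝ) ^ n ∧
      (1 - ε) * 2 ^ (n * (R.1 + R.2)) ≤ (Fintype.card Y : ℝ) ^ n := by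
    intro ε hε hε1
    obtain ⟨n, K1, K2, f1, f2, g, hn, hK1, hK2, herr⟩ := hcode ε hε
    have hpos1 : (0 : ℝ) < 2 ^ (n * R.1) := by positivity
    have hpos2 : (0 : ℝ) < 2 ^ (n * R.2) := by positivity
    have hK1pos : 0 < K1 := by exact_mod_cast hpos1.trans_le hK1
    have hK2pos : 0 < K2 := by exact_mod_cast hpos2.trans_le hK2
    obtain ⟨hX, hY⟩ := one_sub_mul_card_le φ d hK1pos hK2pos f1 f2 g (herr d hd)
    have hεK : (1 - ε) * 2 ^ (n * R.1) * 2 ^ (n * R.2) ≤ (1 - ε) * (K1 * K2) := by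
      rw [mul_assoc]
      exact mul_le_mul_of_nonneg_left (mul_le_mul hK1 hK2 hpos2.le (by positivity))
        (by linarith)
    refine ⟨n, hn, le_of_mul_le_mul_right ?_ (show (0 : ℝ) < K2 by exact_mod_cast hK2pos), ?_⟩
    · nlinarith [mul_le_mul_of_nonneg_left hK1 (by linarith : (0 : ℝ) ≤ 1 - ε)]
    · rw [mul_add, Real.rpow_add two_pos, ← mul_assoc]
      linarith
  refine ⟨hR1, hR2, ?_, ?_⟩
  · exact le_logb_of_forall_one_sub_mul_le_pow (by exact_mod_cast Fintype.card_pos)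
      fun ε hε hε1 => (key ε hε hε1).imp fun n hn => ⟨hn.1, hn.2.1⟩
  · exact le_logb_of_forall_one_sub_mul_le_pow (by exact_mod_cast Fintype.card_pos)
      fun ε hε hε1 => (key ε hε hε1).imp fun n hn => ⟨hn.1, hn.2.2⟩

end Deterministic

section SyncCode

def x1Two : X1ex := ⟨2, by decide⟩

def x1Four : X1ex := ⟨4, by decide⟩

def mk4 (hi lo : Bool) : Fin 4 := ⟨2 * hi.toNat + lo.toNat, by cases hi <;> cases lo <;> decide⟩

lemma lo_eq_of_outEx_mk4_eq :
    ∀ {x x' : X1ex} {hi lo hi' lo' : Bool},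
      outEx x (mk4 hi lo) = outEx x' (mk4 hi' lo') → lo = lo' := by
  decide

lemma eq_of_outEx_mk4_true_eq :
    ∀ {x x' : X1ex} {lo lo' : Bool}, outEx x (mk4 true lo) = outEx x' (mk4 true lo') → x = x' := by
  decide

lemma hi_eq_of_outEx_x1Four_mk4_eq :
    ∀ {hi lo hi' lo' : Bool},
      outEx x1Four (mk4 hi lo) = outEx x1Four (mk4 hi' lo') → hi = hi' := by
  decide

lemma eq_of_ite_x1Four_x1Two_eq :
    ∀ {a b : Bool}, (if a then x1Four else x1Two) = (if b then x1Four else x1Two) → a = b := by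
  decide

variable (dmin dmax k m : ℕ)

def syncLen : ℕ := 2 * (dmin + dmax) + k + m + 1

def freeStart : ℕ := dmin + 2 * dmax + k + 1

/-- Under a larger admissible delay, the time slot where the marker `2` is seen shows one of the
leading `4`s instead, so the marker determines the delay. -/
def syncSymbol (u : Fin k → Bool) (j : ℕ) : X1ex :=
  if h : dmin + dmax < j ∧ j < dmin + dmax + 1 + k then
    (if u ⟨j - (dmin + dmax + 1), by omega⟩ then x1Four else x1Two)
  else if j = dmin + dmax then x1Two else x1Four

def codeword1 (u : Fin k → Bool) : Fin (syncLen dmin dmax k m) → X1ex :=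
  fun i => syncSymbol dmin dmax k u i

/-- User 2 sends one bit per time through `lo`, and `m` more bits through `hi` in the window
starting at `freeStart`, where user 1 is sending `4` whatever the delay; elsewhere `hi = true`,
so that the output reveals user 1's symbol. -/
def codeword2 (c : (Fin (syncLen dmin dmax k m) → Bool) × (Fin m → Bool)) :
    Fin (syncLen dmin dmax k m) → Fin 4 :=
  fun i => mk4
    (if h : freeStart dmin dmax k ≤ i ∧ (i : ℕ) < freeStart dmin dmax k + m then
      c.2 ⟨i - freeStart dmin dmax k, by omega⟩ else true)
    (c.1 i)

variable {dmin dmax k m}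

lemma syncSymbol_marker (u : Fin k → Bool) : syncSymbol dmin dmax k u (dmin + dmax) = x1Two := by
  simp [syncSymbol]

lemma syncSymbol_data (u : Fin k → Bool) (j : Fin k) :
    syncSymbol dmin dmax k u (dmin + dmax + 1 + j) = if u j then x1Four else x1Two := by
  rw [syncSymbol, dif_pos (by omega)]
  simp

lemma syncSymbol_eq_x1Four (u : Fin k → Bool) {j : ℕ}
    (hj : j < dmin + dmax ∨ dmin + dmax + 1 + k ≤ j) : syncSymbol dmin dmax k u j = x1Four := by
  rw [syncSymbol, dif_neg (by omega), if_neg (by omega)]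

lemma extVec_codeword1 (u : Fin k → Bool) {i : ℕ} {d : ℤ} {j : ℕ} (hj : (i : ℤ) - d = j)
    (hjn : j < syncLen dmin dmax k m) :
    extVec (codeword1 dmin dmax k m u) (i - d) = syncSymbol dmin dmax k u j := by
  rw [hj, extVec, dif_pos (by omega)]
  simp [codeword1]

lemma codeword2_of_lt (c : (Fin (syncLen dmin dmax k m) → Bool) × (Fin m → Bool))
    (i : Fin (syncLen dmin dmax k m)) (hi : (i : ℕ) < freeStart dmin dmax k) :
    codeword2 dmin dmax k m c i = mk4 true (c.1 i) := by
  rw [codeword2, dif_neg (by omega)]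

lemma codeword2_free (c : (Fin (syncLen dmin dmax k m) → Bool) × (Fin m → Bool)) (r : Fin m) :
    codeword2 dmin dmax k m c ⟨freeStart dmin dmax k + r, by unfold syncLen freeStart; omega⟩
      = mk4 (c.2 r) (c.1 ⟨freeStart dmin dmax k + r, by unfold syncLen freeStart; omega⟩) := by
  rw [codeword2, dif_pos (by simp)]
  simp

variable {d d' : ℤ}

lemma exists_extVec_codeword1_ne (hd : d ∈ delaySet dmin dmax) (hd' : d' ∈ delaySet dmin dmax)
    (hlt : d < d') (u u' : Fin k → Bool) :
    ∃ i : Fin (syncLen dmin dmax k m), (i : ℕ) < freeStart dmin dmax k ∧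
      extVec (codeword1 dmin dmax k m u) (i - d) ≠ extVec (codeword1 dmin dmax k m u') (i - d') := by
  simp only [delaySet, Finset.mem_Icc] at hd hd'
  refine ⟨⟨(dmin + dmax + d).toNat, by unfold syncLen; omega⟩, by unfold freeStart; simp; omega, ?_⟩
  rw [extVec_codeword1 u (j := dmin + dmax) (by simp; omega) (by unfold syncLen; omega),
    extVec_codeword1 u' (j := (dmin + dmax + d - d').toNat) (by simp; omega)
      (by unfold syncLen; omega),
    syncSymbol_marker, syncSymbol_eq_x1Four u' (Or.inl (by omega))]
  decide

theorem syncCode_injective (hd : d ∈ delaySet dmin dmax) (hd' : d' ∈ delaySet dmin dmax)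
    {u u' : Fin k → Bool} {c c' : (Fin (syncLen dmin dmax k m) → Bool) × (Fin m → Bool)}
    (h : detOutput outEx d (codeword1 dmin dmax k m u) (codeword2 dmin dmax k m c)
      = detOutput outEx d' (codeword1 dmin dmax k m u') (codeword2 dmin dmax k m c')) :
    (u, c) = (u', c') := by
  have hy := congrFun h
  simp only [detOutput] at hy
  have hlo : c.1 = c'.1 := funext fun i => lo_eq_of_outEx_mk4_eq (hy i)
  have hhi : c.2 = c'.2 := by
    simp only [delaySet, Finset.mem_Icc] at hd hd'
    funext r
    have hr := hy ⟨freeStart dmin dmax k + r, by unfold syncLen freeStart; omega⟩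
    rw [codeword2_free, codeword2_free,
      extVec_codeword1 u (j := ((freeStart dmin dmax k + r : ℕ) - d).toNat)
        (by unfold freeStart; simp; omega)
        (by unfold syncLen freeStart; omega),
      extVec_codeword1 u' (j := ((freeStart dmin dmax k + r : ℕ) - d').toNat)
        (by unfold freeStart; simp; omega)
        (by unfold syncLen freeStart; omega),
      syncSymbol_eq_x1Four u (Or.inr (by unfold freeStart at *; omega)),
      syncSymbol_eq_x1Four u' (Or.inr (by unfold freeStart at *; omega))] at hr
    exact hi_eq_of_outEx_x1Four_mk4_eq hr
  have hx1 : ∀ i : Fin (syncLen dmin dmax k m), (i : ℕ) < freeStart dmin dmax k →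
      extVec (codeword1 dmin dmax k m u) (i - d) = extVec (codeword1 dmin dmax k m u') (i - d') :=
    fun i hi => eq_of_outEx_mk4_true_eq (lo := c.1 i) (lo' := c'.1 i) <| by
      rw [← codeword2_of_lt c i hi, ← codeword2_of_lt c' i hi]
      exact hy i
  have hdd : d = d' := by
    by_contra hne
    rcases lt_or_gt_of_ne hne with hlt | hlt
    · obtain ⟨i, hi, hne⟩ := exists_extVec_codeword1_ne (m := m) hd hd' hlt u u'
      exact hne (hx1 i hi)
    · obtain ⟨i, hi, hne⟩ := exists_extVec_codeword1_ne (m := m) hd' hd hlt u' u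
      exact hne (hx1 i hi).symm
  subst hdd
  simp only [delaySet, Finset.mem_Icc] at hd
  have hu : u = u' := funext fun j => by
    have hj := hx1 ⟨(dmin + dmax + 1 + j + d).toNat, by unfold syncLen; omega⟩
      (by unfold freeStart; simp; omega)
    rw [extVec_codeword1 u (j := dmin + dmax + 1 + j) (by simp; omega)
        (by unfold syncLen; omega),
      extVec_codeword1 u' (j := dmin + dmax + 1 + j) (by simp; omega)
        (by unfold syncLen; omega),
      syncSymbol_data, syncSymbol_data] at hj
    exact eq_of_ite_x1Four_x1Two_eq hj
  rw [hu, Prod.ext hlo hhi]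

end SyncCode

theorem MACAchievable_Wex_of_le (dmin dmax k m : ℕ) {R : ℝ × ℝ} (hR1 : 0 ≤ R.1) (hR2 : 0 ≤ R.2)
    (h1 : syncLen dmin dmax k m * R.1 ≤ k)
    (h2 : syncLen dmin dmax k m * R.2 ≤ syncLen dmin dmax k m + m) :
    MACAchievable Wex dmin dmax R := by
  obtain ⟨g, hg⟩ := exists_decoder_of_injective (D := ↑(delaySet dmin dmax))
    (fun d (p : (Fin k → Bool) × ((Fin (syncLen dmin dmax k m) → Bool) × (Fin m → Bool))) =>
      detOutput outEx d (codeword1 dmin dmax k m p.1) (codeword2 dmin dmax k m p.2))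
    fun d hd d' hd' _ _ h => syncCode_injective hd hd' h
  have hpow {a : ℝ} {b : ℕ} (h : a ≤ b) : (2 : ℝ) ^ a ≤ 2 ^ b :=
    (Real.rpow_le_rpow_of_exponent_le one_le_two h).trans_eq (Real.rpow_natCast 2 b)
  exact MACAchievable_of_zeroError outEx (by unfold syncLen; omega) hR1 hR2
    (by simpa using hpow h1) (by simpa [pow_add] using hpow (b := syncLen dmin dmax k m + m) (by exact_mod_cast h2)) (codeword1 dmin dmax k m)
    (codeword2 dmin dmax k m) g fun d hd u c => hg d hd (u, c)

theorem MACAchievable_Wex (dmin dmax : ℕ) {R : ℝ × ℝ} (hR1 : 0 ≤ R.1) (hR2 : 0 ≤ R.2)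
    (h1 : R.1 < 1) (h12 : R.1 + R.2 < 2) : MACAchievable Wex dmin dmax R := by
  set C := 2 * (dmin + dmax) + 1
  obtain ⟨n, hn1, hn2⟩ : ∃ n : ℕ, (C + 1 : ℝ) ≤ (1 - R.1) * n ∧ (C + 1 : ℝ) ≤ (2 - R.1 - R.2) * n :=
    (((tendsto_natCast_atTop_atTop.const_mul_atTop (by linarith)).eventually_ge_atTop _).and
      ((tendsto_natCast_atTop_atTop.const_mul_atTop (by linarith)).eventually_ge_atTop _)).exists
  set k := ⌈n * R.1⌉₊
  have hk : n * R.1 ≤ k := Nat.le_ceil _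
  have hk' : (k : ℝ) < n * R.1 + 1 := Nat.ceil_lt_add_one (by positivity)
  have hkC : k + C ≤ n := by exact_mod_cast (show (k + C : ℝ) ≤ n by linarith)
  have hlen : syncLen dmin dmax k (n - C - k) = n := by unfold syncLen; omega
  refine MACAchievable_Wex_of_le dmin dmax k (n - C - k) hR1 hR2 ?_ ?_ <;> rw [hlen]
  · exact hk
  · rw [Nat.cast_sub (by omega), Nat.cast_sub (by omega)]
    linarith

theorem ACCMACAchievable.mem_trapezoid_one_two {dmin dmax : ℕ} {R : ℝ × ℝ}
    (hR : ACCMACAchievable Wex dmin dmax R) : R ∈ trapezoid 1 2 := by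
  have hX : Fintype.card X1ex = 2 := by rw [Fintype.card_coe]; rfl
  have h4 : logb 2 (4 : ℝ) = 2 := by
    rw [show (4 : ℝ) = 2 ^ (2 : ℝ) by norm_num, Real.logb_rpow two_pos (by norm_num)]
  simpa [hX, h4] using ACCMACAchievable.mem_trapezoid outEx hR

/-- **Example (CC-MAC side).** For the channel `Y = X2 mod X1` with
`X1 = {2,4}`, `X2 = Y = {0,1,2,3}`, the capacity region of the synchronous
codeword-cognitive MAC (the ACC-MAC with `D = {0}`) is the trapezoid
`{(R1,R2) : R1,R2 ≥ 0, R1 ≤ 1, R1+R2 ≤ 2}` (bits); it coincides with the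
capacity region of the same channel with no side-information at either
transmitter, and it is the capacity region of the ACC-MAC for every finite
bounded delay set. -/
theorem example_ccmac_capacity :
    ACCMACCapacity Wex 0 0
        = {R : ℝ × ℝ | 0 ≤ R.1 ∧ 0 ≤ R.2 ∧ R.1 ≤ 1 ∧ R.1 + R.2 ≤ 2} ∧
    MACCapacity Wex 0 0
        = {R : ℝ × ℝ | 0 ≤ R.1 ∧ 0 ≤ R.2 ∧ R.1 ≤ 1 ∧ R.1 + R.2 ≤ 2} ∧
    ∀ dmin dmax : ℕ,
      ACCMACCapacity Wex dmin dmax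
        = {R : ℝ × ℝ | 0 ≤ R.1 ∧ 0 ≤ R.2 ∧ R.1 ≤ 1 ∧ R.1 + R.2 ≤ 2} := by
  have hMAC (dmin dmax : ℕ) : trapezoid 1 2 ⊆ MACCapacity Wex dmin dmax :=
    trapezoid_subset_closure one_pos two_pos fun _ => MACAchievable_Wex dmin dmax
  have hACC (dmin dmax : ℕ) : ACCMACCapacity Wex dmin dmax = trapezoid 1 2 :=
    (closure_minimal (fun _ => ACCMACAchievable.mem_trapezoid_one_two)
      (isClosed_trapezoid 1 2)).antisymm
      ((hMAC dmin dmax).trans (closure_mono fun _ => MACAchievable.toACCMACAchievable))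
  refine ⟨hACC 0 0, ?_, hACC⟩
  exact (closure_minimal (fun _ hR => hR.toACCMACAchievable.mem_trapezoid_one_two)
    (isClosed_trapezoid 1 2)).antisymm (hMAC 0 0)

end ACMACPaper
end
end
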